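/- The quantity Y_{p,q} satisfies the recursion Y_{p,q} = Y_{p-1,q} + (-1)^p Y_{p,q-1} for all p, q ≥ 1. -/
import Mathlib


/-- `Y p q = binom(⌊(p+q)/2⌋, ⌊p/2⌋)` if `p` or `q` is even, and `0` otherwise. -/
def Y (p q : ℕ) : ℤ :=
  if Even p ∨ Even q then (((p + q) / 2).choose (p / 2) : ℤ) else 0

theorem Y_recursion (p q : ℕ) (hp : 1 ≤ p) (hq : 1 ≤ q) :
    Y p q = Y (p - 1) q + (-1) ^ p * Y p (q - 1) := by
  rcases Nat.even_or_odd p with ⟨a, ha⟩ | ⟨a, ha⟩ <;>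
    rcases Nat.even_or_odd q with ⟨b, hb⟩ | ⟨b, hb⟩ <;>
    subst ha hb <;>
    simp only [Y] <;>
    [skip; skip; skip; skip]
  · obtain ⟨a, rfl⟩ : ∃ a', a = a' + 1 := ⟨a - 1, by omega⟩
    obtain ⟨b, rfl⟩ : ∃ b', b = b' + 1 := ⟨b - 1, by omega⟩
    have h1 : Even ((a+1)+(a+1)) := ⟨a+1, rfl⟩
    have h2 : Even ((b+1)+(b+1)) := ⟨b+1, rfl⟩
    have h3 : ¬ Even ((a+1)+(a+1) - 1) := by
      rw [show (a+1)+(a+1)-1 = 2*a+1 by omega]; simp [parity_simps]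
    have h4 : ¬ Even ((b+1)+(b+1) - 1) := by
      rw [show (b+1)+(b+1)-1 = 2*b+1 by omega]; simp [parity_simps]
    simp only [if_pos (Or.inl h1), if_pos (Or.inr h2), if_pos (Or.inl h1)]
    have e1 : ((a+1)+(a+1) + ((b+1)+(b+1)))/2 = (a+b+1)+1 := by omega
    have e2 : ((a+1)+(a+1))/2 = a+1 := by omega
    have e3 : ((a+1)+(a+1) - 1 + ((b+1)+(b+1)))/2 = a+b+1 := by omega
    have e4 : ((a+1)+(a+1) - 1)/2 = a := by omega
    have e5 : ((a+1)+(a+1) + ((b+1)+(b+1) - 1))/2 = a+b+1 := by omega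
    rw [e1, e2, e3, e4, e5, Even.neg_one_pow h1, one_mul,
      Nat.choose_succ_succ (a+b+1) a]
    push_cast
    ring
  · have h1 : Even (a+a) := ⟨a, rfl⟩
    have h3 : ¬ Even (a+a-1) := by
      rw [show a+a-1 = 2*(a-1)+1 by omega]; simp [parity_simps]
    have h4 : ¬ Even (2*b+1) := by simp [parity_simps]
    have h5 : Even (2*b+1-1) := by simpa using ⟨b, by omega⟩
    simp only [if_pos (Or.inl h1), if_neg (by tauto : ¬(Even (a+a-1) ∨ Even (2*b+1)))]
    have e1 : (a+a+(2*b+1))/2 = a+b := by omega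
    have e2 : (a+a)/2 = a := by omega
    have e3 : (a+a+(2*b+1-1))/2 = a+b := by omega
    rw [e1, e2, e3, Even.neg_one_pow h1]
    ring
  · have h1 : ¬ Even (2*a+1) := by simp [parity_simps]
    have h2 : Even (b+b) := ⟨b, rfl⟩
    have h5 : Even (2*a+1-1) := by simpa using ⟨a, by omega⟩
    have h4 : ¬ Even (b+b-1) := by
      rw [show b+b-1 = 2*(b-1)+1 by omega]; simp [parity_simps]
    simp only [if_pos (Or.inr h2), if_pos (Or.inl h5),
      if_neg (by tauto : ¬(Even (2*a+1) ∨ Even (b+b-1)))]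
    have e1 : (2*a+1+(b+b))/2 = a+b := by omega
    have e2 : (2*a+1)/2 = a := by omega
    have e3 : (2*a+1-1+(b+b))/2 = a+b := by omega
    have e4 : (2*a+1-1)/2 = a := by omega
    rw [e1, e2, e3, e4, Odd.neg_one_pow ⟨a, by omega⟩]
    ring
  · have h1 : ¬ Even (2*a+1) := by simp [parity_simps]
    have h2 : ¬ Even (2*b+1) := by simp [parity_simps]
    have h5 : Even (2*a+1-1) := by simpa using ⟨a, by omega⟩
    have h6 : Even (2*b+1-1) := by simpa using ⟨b, by omega⟩
    simp only [if_neg (by tauto : ¬(Even (2*a+1) ∨ Even (2*b+1))),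
      if_pos (Or.inl h5), if_pos (Or.inr h6)]
    have e1 : (2*a+1-1+(2*b+1))/2 = a+b := by omega
    have e2 : (2*a+1-1)/2 = a := by omega
    have e3 : (2*a+1+(2*b+1-1))/2 = a+b := by omega
    have e4 : (2*a+1)/2 = a := by omega
    rw [e1, e2, e3, e4, Odd.neg_one_pow ⟨a, by omega⟩]
    ring
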